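/- Let N be a zero symmetric near-ring with a faithful N-group Γ, S = Aut_N(Γ), and X = X₁ ∪ {0} an S-invariant set of representatives of ∼ with φ : Γ → X the representative map. For n ∈ N define f_n : X → Γ, x ↦ nx. Then the map h : N → M₀(X,Γ,φ,S), n ↦ f_n, is an injective near-ring homomorphism (where M₀(X,Γ,φ,S) carries pointwise addition and sandwich multiplication f ∘' g = f ∘ φ ∘ g). -/

import Mathlib

/-- The sandwich multiplication `f ∘' g = f ∘ φ ∘ g` on functions `X → Γ`. -/
def sandwichMul {Γ : Type*} {X : Set Γ} (φ : Γ → Γ) (hφX : ∀ γ : Γ, φ γ ∈ X)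
    (f g : X → Γ) : X → Γ :=
  fun x => f ⟨φ (g x), hφX (g x)⟩

section RightDistribAction

variable {N Γ : Type*} [AddGroup N] [AddGroup Γ] [SMul N Γ]
  (hact_add : ∀ (m n : N) (γ : Γ), (m + n) • γ = m • γ + n • γ)

def smulLeftAddHom (γ : Γ) : N →+ Γ :=
  AddMonoidHom.mk' (· • γ) fun m n => hact_add m n γ

include hact_add

theorem zero_smul_of_add_smul (γ : Γ) : (0 : N) • γ = 0 :=
  (smulLeftAddHom hact_add γ).map_zero

theorem sub_smul_of_add_smul (m n : N) (γ : Γ) : (m - n) • γ = m • γ - n • γ :=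
  (smulLeftAddHom hact_add γ).map_sub m n

theorem smul_zero_of_mul_zero [Mul N] (hzs : ∀ n : N, n * 0 = 0)
    (hact_mul : ∀ (m n : N) (γ : Γ), (m * n) • γ = m • (n • γ)) (n : N) :
    n • (0 : Γ) = 0 := by
  calc n • (0 : Γ) = n • ((0 : N) • (0 : Γ)) := by rw [zero_smul_of_add_smul hact_add]
    _ = (n * 0) • (0 : Γ) := (hact_mul n 0 0).symm
    _ = 0 := by rw [hzs, zero_smul_of_add_smul hact_add]

theorem eq_of_smul_eq_on_representatives
    (hfaithful : ∀ n : N, (∀ γ : Γ, n • γ = 0) → n = 0)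
    {X : Set Γ} {φ : Γ → Γ} (hφX : ∀ γ : Γ, φ γ ∈ X)
    (hφsim : ∀ (γ : Γ) (n : N), n • φ γ = n • γ)
    {m n : N} (h : ∀ x ∈ X, m • x = n • x) : m = n := by
  refine sub_eq_zero.mp (hfaithful _ fun γ => ?_)
  rw [sub_smul_of_add_smul hact_add, ← hφsim γ m, ← hφsim γ n, h _ (hφX γ), sub_self]

end RightDistribAction

theorem stmt_10_general {N Γ : Type*} [AddGroup N] [Mul N] [AddGroup Γ] [SMul N Γ]
    (hzs : ∀ n : N, n * 0 = 0)
    (hact_add : ∀ (m n : N) (γ : Γ), (m + n) • γ = m • γ + n • γ)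
    (hact_mul : ∀ (m n : N) (γ : Γ), (m * n) • γ = m • (n • γ))
    -- Γ is faithful:
    (hfaithful : ∀ n : N, (∀ γ : Γ, n • γ = 0) → n = 0)
    -- X = X₁ ∪ {0} is an S-invariant set of representatives of ∼, S = Aut_N(Γ):
    (X : Set Γ) (h0X : (0 : Γ) ∈ X)
    (hSX : ∀ s : Γ ≃+ Γ, (∀ (n : N) (δ : Γ), s (n • δ) = n • s δ) → ∀ x ∈ X, s x ∈ X)
    -- φ is the representative map of ∼:
    (φ : Γ → Γ) (hφX : ∀ γ : Γ, φ γ ∈ X)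
    (hφsim : ∀ (γ : Γ) (n : N), n • φ γ = n • γ) :
    -- h n := f_n lands in M₀(X,Γ,φ,S):
    (∀ n : N, (fun x : X => n • (x : Γ)) ⟨0, h0X⟩ = 0 ∧
      ∀ s : Γ ≃+ Γ, ∀ hs : (∀ (m : N) (δ : Γ), s (m • δ) = m • s δ), ∀ x : X,
        (fun x : X => n • (x : Γ)) ⟨s x, hSX s hs x x.2⟩
          = s ((fun x : X => n • (x : Γ)) x)) ∧
    -- h is additive:
    (∀ m n : N, (fun x : X => (m + n) • (x : Γ))
      = (fun x : X => m • (x : Γ)) + (fun x : X => n • (x : Γ))) ∧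
    -- h is multiplicative w.r.t. the sandwich multiplication:
    (∀ m n : N, (fun x : X => (m * n) • (x : Γ))
      = sandwichMul φ hφX (fun x : X => m • (x : Γ)) (fun x : X => n • (x : Γ))) ∧
    -- h is injective:
    (∀ m n : N, (fun x : X => m • (x : Γ)) = (fun x : X => n • (x : Γ)) → m = n) := by
  refine ⟨fun n => ⟨smul_zero_of_mul_zero hact_add hzs hact_mul n, fun s hs x => (hs n x).symm⟩,
    fun m n => funext fun x => hact_add m n x,
    fun m n => funext fun x => ?_,
    fun m n h => eq_of_smul_eq_on_representatives hact_add hfaithful hφX hφsim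
      fun x hx => congrFun h ⟨x, hx⟩⟩
  rw [sandwichMul, hact_mul, hφsim]

/-- The map `h : n ↦ f_n` with `f_n : X → Γ, x ↦ nx` is an
injective near-ring homomorphism from `N` into the sandwich centralizer
near-ring `M₀(X,Γ,φ,S)`, `S = Aut_N(Γ)`. -/
theorem stmt_10 {N Γ : Type*} [AddGroup N] [Mul N] [AddGroup Γ] [SMul N Γ]
    (hmul_assoc : ∀ a b c : N, a * b * c = a * (b * c))
    (hrdistrib : ∀ a b c : N, (a + b) * c = a * c + b * c)
    (hzs : ∀ n : N, n * 0 = 0)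
    (hact_add : ∀ (m n : N) (γ : Γ), (m + n) • γ = m • γ + n • γ)
    (hact_mul : ∀ (m n : N) (γ : Γ), (m * n) • γ = m • (n • γ))
    -- Γ is faithful:
    (hfaithful : ∀ n : N, (∀ γ : Γ, n • γ = 0) → n = 0)
    -- X = X₁ ∪ {0} is an S-invariant set of representatives of ∼, S = Aut_N(Γ):
    (X : Set Γ) (h0X : (0 : Γ) ∈ X)
    (hrepex : ∀ γ : Γ, ∃ x ∈ X, ∀ n : N, n • x = n • γ)
    (hrep : ∀ x ∈ X, ∀ y ∈ X, (∀ n : N, n • x = n • y) → x = y)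
    (hSX : ∀ s : Γ ≃+ Γ, (∀ (n : N) (δ : Γ), s (n • δ) = n • s δ) → ∀ x ∈ X, s x ∈ X)
    -- φ is the representative map of ∼:
    (φ : Γ → Γ) (hφX : ∀ γ : Γ, φ γ ∈ X)
    (hφsim : ∀ (γ : Γ) (n : N), n • φ γ = n • γ) :
    -- h n := f_n lands in M₀(X,Γ,φ,S):
    (∀ n : N, (fun x : X => n • (x : Γ)) ⟨0, h0X⟩ = 0 ∧
      ∀ s : Γ ≃+ Γ, ∀ hs : (∀ (m : N) (δ : Γ), s (m • δ) = m • s δ), ∀ x : X,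
        (fun x : X => n • (x : Γ)) ⟨s x, hSX s hs x x.2⟩
          = s ((fun x : X => n • (x : Γ)) x)) ∧
    -- h is additive:
    (∀ m n : N, (fun x : X => (m + n) • (x : Γ))
      = (fun x : X => m • (x : Γ)) + (fun x : X => n • (x : Γ))) ∧
    -- h is multiplicative w.r.t. the sandwich multiplication:
    (∀ m n : N, (fun x : X => (m * n) • (x : Γ))
      = sandwichMul φ hφX (fun x : X => m • (x : Γ)) (fun x : X => n • (x : Γ))) ∧
    -- h is injective:
    (∀ m n : N, (fun x : X => m • (x : Γ)) = (fun x : X => n • (x : Γ)) → m = n) :=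
  stmt_10_general hzs hact_add hact_mul hfaithful X h0X hSX φ hφX hφsim
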